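/- arXiv:hep-th/0106122 — 2 statements merged into one kernel-verified Lean document; each statement's English description precedes it below -/
import Mathlib

section
/- Consider the bialgebra M'(m|n) generated by a matrix coalgebra {t_{ij}}, i,j ∈ {1,…,m+n}, with Δt_{ij} = Σ_k t_{ik} ⊗ t_{kj}, ε(t_{ij}) = δ_{ij}, and algebra relations t_{ij} t_{kl} = (−1)^{|i||k| + |j||l|} t_{kl} t_{ij} (where |i| = 1 for i ≤ m, 0 otherwise). Then the bilinear form R(t_{ij} ⊗ t_{kl}) = (−1)^{|i||k|} δ_{ij} δ_{kl}, extended as a bialgebra bicharacter, is a well-defined coquasitriangular structure on M'(m|n); in particular the quasi-commutativity relation b⁽¹⁾a⁽¹⁾R(a⁽²⁾ ⊗ b⁽²⁾) = R(a⁽¹⁾ ⊗ b⁽¹⁾)a⁽²⁾b⁽²⁾ reproduces exactly the stated commutation relations on generators. -/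
open TensorProduct Coalgebra

noncomputable section

namespace QG

variable {A : Type*} [Semiring A] [Bialgebra ℂ A]

/-- Multiplication of `ℂ` as a linear map. -/
def mulC : ℂ ⊗[ℂ] ℂ →ₗ[ℂ] ℂ := LinearMap.mul' ℂ ℂ

/-- The comultiplication of the tensor-square coalgebra,
`a ⊗ b ↦ (a⁽¹⁾ ⊗ b⁽¹⁾) ⊗ (a⁽²⁾ ⊗ b⁽²⁾)`. -/
def comul2 : A ⊗[ℂ] A →ₗ[ℂ] (A ⊗[ℂ] A) ⊗[ℂ] (A ⊗[ℂ] A) :=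
  (tensorTensorTensorComm ℂ A A A A).toLinearMap ∘ₗ TensorProduct.map comul comul

/-- Convolution product of two linear functionals on `A ⊗ A`. -/
def convMul (R S : A ⊗[ℂ] A →ₗ[ℂ] ℂ) : A ⊗[ℂ] A →ₗ[ℂ] ℂ :=
  mulC ∘ₗ TensorProduct.map R S ∘ₗ comul2

/-- `ε ⊗ ε` as a linear functional on `A ⊗ A`. -/
def counit2 : A ⊗[ℂ] A →ₗ[ℂ] ℂ :=
  mulC ∘ₗ TensorProduct.map counit counit

/-- A coquasitriangular structure on the bialgebra `A`:  a convolution-invertible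
bilinear form `R` satisfying `R(ab ⊗ c) = R(a ⊗ c⁽¹⁾)R(b ⊗ c⁽²⁾)`,
`R(a ⊗ bc) = R(a⁽¹⁾ ⊗ c)R(a⁽²⁾ ⊗ b)` and the quasi-commutativity
`b⁽¹⁾a⁽¹⁾ R(a⁽²⁾ ⊗ b⁽²⁾) = R(a⁽¹⁾ ⊗ b⁽¹⁾) a⁽²⁾b⁽²⁾`, all stated as equalities of
linear maps. -/
structure IsCoquasitriangular (R : A ⊗[ℂ] A →ₗ[ℂ] ℂ) : Prop where
  convInv : ∃ Ri : A ⊗[ℂ] A →ₗ[ℂ] ℂ, convMul R Ri = counit2 ∧ convMul Ri R = counit2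
  mul_left : R ∘ₗ LinearMap.rTensor A (LinearMap.mul' ℂ A)
      = mulC ∘ₗ TensorProduct.map R R ∘ₗ (tensorTensorTensorComm ℂ A A A A).toLinearMap
          ∘ₗ LinearMap.lTensor (A ⊗[ℂ] A) comul
  mul_right : R ∘ₗ LinearMap.lTensor A (LinearMap.mul' ℂ A)
      = mulC ∘ₗ TensorProduct.map R R ∘ₗ (tensorTensorTensorComm ℂ A A A A).toLinearMap
          ∘ₗ LinearMap.lTensor (A ⊗[ℂ] A) (TensorProduct.comm ℂ A A).toLinearMap
          ∘ₗ LinearMap.rTensor (A ⊗[ℂ] A) comul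
  quasi_comm : (TensorProduct.rid ℂ A).toLinearMap ∘ₗ
        TensorProduct.map (LinearMap.mul' ℂ A ∘ₗ (TensorProduct.comm ℂ A A).toLinearMap) R
          ∘ₗ comul2
      = (TensorProduct.lid ℂ A).toLinearMap ∘ₗ
        TensorProduct.map R (LinearMap.mul' ℂ A) ∘ₗ comul2

/-- The cotriangularity (symmetry) condition
`R(a⁽¹⁾ ⊗ b⁽¹⁾) R(b⁽²⁾ ⊗ a⁽²⁾) = ε(a)ε(b)`. -/
def SymmCond (R : A ⊗[ℂ] A →ₗ[ℂ] ℂ) : Prop :=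
  mulC ∘ₗ TensorProduct.map R (R ∘ₗ (TensorProduct.comm ℂ A A).toLinearMap) ∘ₗ comul2
    = counit2

/-- A cotriangular structure: a coquasitriangular structure which in addition is
symmetric. -/
structure IsCotriangular (R : A ⊗[ℂ] A →ₗ[ℂ] ℂ) extends IsCoquasitriangular R : Prop where
  symm : SymmCond R

end QG

section MyAux
open LinearMap

namespace QGA
open QG
variable {A : Type} [Ring A] [Bialgebra ℂ A]

def br (f g : A →ₗ[ℂ] ℂ) : A ⊗[ℂ] A →ₗ[ℂ] ℂ := mulC ∘ₗ TensorProduct.map f g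
def cnv (f g : A →ₗ[ℂ] ℂ) : A →ₗ[ℂ] ℂ := br f g ∘ₗ comul
@[simp] lemma br_tmul (f g : A →ₗ[ℂ] ℂ) (x y : A) : br f g (x ⊗ₜ[ℂ] y) = f x * g y := rfl
@[simp] lemma mulC_tmul (x y : ℂ) : mulC (x ⊗ₜ[ℂ] y) = x * y := rfl

abbrev T4 : (A ⊗[ℂ] A) ⊗[ℂ] (A ⊗[ℂ] A) →ₗ[ℂ] (A ⊗[ℂ] A) ⊗[ℂ] (A ⊗[ℂ] A) :=
  (tensorTensorTensorComm ℂ A A A A).toLinearMap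

lemma cnv_counit_left (g : A →ₗ[ℂ] ℂ) : cnv counit g = g := by
  have h : (br (counit (R := ℂ) (A := A)) g) = g ∘ₗ (TensorProduct.lid ℂ A).toLinearMap ∘ₗ LinearMap.rTensor A counit := by
    ext x y; simp [br, mulC, LinearMap.rTensor]
  rw [cnv, h]
  ext x
  simp only [LinearMap.comp_apply, rTensor_counit_comul, LinearMap.coe_comp, LinearEquiv.coe_coe, Function.comp_apply]
  simp

lemma cnv_counit_right (f : A →ₗ[ℂ] ℂ) : cnv f counit = f := by
  have h : (br f (counit (R := ℂ) (A := A))) = f ∘ₗ (TensorProduct.rid ℂ A).toLinearMap ∘ₗ LinearMap.lTensor A counit := by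
    ext x y; simp [br, mulC, LinearMap.lTensor, mul_comm]
  rw [cnv, h]
  ext x
  simp only [LinearMap.comp_apply, lTensor_counit_comul, LinearMap.coe_comp, LinearEquiv.coe_coe, Function.comp_apply]
  simp

lemma L4 (f g f' g' : A →ₗ[ℂ] ℂ) :
    mulC ∘ₗ TensorProduct.map (br f g) (br f' g') ∘ₗ T4 (A := A)
      = mulC ∘ₗ TensorProduct.map (br f f') (br g g') := by
  ext x y u v
  simp [mulC]
  ring

lemma L4' (f g f' g' : A →ₗ[ℂ] ℂ) :
    mulC ∘ₗ TensorProduct.map (br f g) (br f' g') ∘ₗ T4 (A := A)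
        ∘ₗ LinearMap.lTensor (A ⊗[ℂ] A) (TensorProduct.comm ℂ A A).toLinearMap
      = mulC ∘ₗ TensorProduct.map (br f f') (br g' g) := by
  ext x y u v
  simp [mulC]
  ring

def tri (f f' h : A →ₗ[ℂ] ℂ) : (A ⊗[ℂ] A) ⊗[ℂ] A →ₗ[ℂ] ℂ :=
  mulC ∘ₗ TensorProduct.map (br f f') h

def tri' (h f f' : A →ₗ[ℂ] ℂ) : A ⊗[ℂ] (A ⊗[ℂ] A) →ₗ[ℂ] ℂ :=
  mulC ∘ₗ TensorProduct.map h (br f f')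

-- mul_left steps
lemma stepL (f g f' g' : A →ₗ[ℂ] ℂ) :
    mulC ∘ₗ TensorProduct.map (br f g) (br f' g') ∘ₗ T4 (A := A)
        ∘ₗ LinearMap.lTensor (A ⊗[ℂ] A) (comul (R := ℂ) (A := A))
      = tri f f' (cnv g g') := by
  ext x y z
  have h4 := LinearMap.congr_fun (L4 f g f' g') ((x ⊗ₜ[ℂ] y) ⊗ₜ[ℂ] comul z)
  simp only [LinearMap.comp_apply, LinearEquiv.coe_coe] at h4
  simp only [AlgebraTensorModule.curry_apply, TensorProduct.curry_apply,
    LinearMap.coe_restrictScalars, LinearMap.comp_apply, LinearEquiv.coe_coe,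
    lTensor_tmul, h4, tri, cnv, TensorProduct.map_tmul]

lemma stepLHS (f g : A →ₗ[ℂ] ℂ) (hf : f ∘ₗ LinearMap.mul' ℂ A = br f f) :
    br f g ∘ₗ LinearMap.rTensor A (LinearMap.mul' ℂ A) = tri f f g := by
  ext x y z
  have := congrFun (congrArg DFunLike.coe hf) (x ⊗ₜ[ℂ] y)
  simp only [LinearMap.comp_apply, LinearMap.mul'_apply] at this
  simp [mulC, tri, LinearMap.rTensor, this]

-- mul_right steps
lemma stepR (f g f' g' : A →ₗ[ℂ] ℂ) :
    mulC ∘ₗ TensorProduct.map (br f g) (br f' g') ∘ₗ T4 (A := A)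
        ∘ₗ LinearMap.lTensor (A ⊗[ℂ] A) (TensorProduct.comm ℂ A A).toLinearMap
        ∘ₗ LinearMap.rTensor (A ⊗[ℂ] A) (comul (R := ℂ) (A := A))
      = tri' (cnv f f') g' g := by
  ext x y z
  have h4 := LinearMap.congr_fun (L4' f g f' g') (comul x ⊗ₜ[ℂ] (y ⊗ₜ[ℂ] z))
  simp only [LinearMap.comp_apply, LinearEquiv.coe_coe] at h4
  simp only [AlgebraTensorModule.curry_apply, TensorProduct.curry_apply,
    LinearMap.coe_restrictScalars, LinearMap.comp_apply, LinearEquiv.coe_coe,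
    rTensor_tmul, h4, tri', cnv, TensorProduct.map_tmul]

lemma stepRHS' (f g : A →ₗ[ℂ] ℂ) (hg : g ∘ₗ LinearMap.mul' ℂ A = br g g) :
    br f g ∘ₗ LinearMap.lTensor A (LinearMap.mul' ℂ A) = tri' f g g := by
  ext x y z
  have := congrFun (congrArg DFunLike.coe hg) (y ⊗ₜ[ℂ] z)
  simp only [LinearMap.comp_apply, LinearMap.mul'_apply] at this
  simp [mulC, tri', LinearMap.lTensor, this]

-- convolution step
lemma stepC (f g f' g' : A →ₗ[ℂ] ℂ) :
    mulC ∘ₗ TensorProduct.map (br f g) (br f' g') ∘ₗ comul2 (A := A)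
      = mulC ∘ₗ TensorProduct.map (cnv f f') (cnv g g') := by
  ext x y
  have h4 := LinearMap.congr_fun (L4 f g f' g') (comul x ⊗ₜ[ℂ] comul y)
  simp only [LinearMap.comp_apply, LinearEquiv.coe_coe] at h4
  simp only [AlgebraTensorModule.curry_apply, TensorProduct.curry_apply,
    LinearMap.coe_restrictScalars, LinearMap.comp_apply, LinearEquiv.coe_coe,
    comul2, TensorProduct.map_tmul, h4, cnv]

def Rmap (χ : A →ₗ[ℂ] ℂ) : A ⊗[ℂ] A →ₗ[ℂ] ℂ :=
  (2⁻¹ : ℂ) • br counit counit + (2⁻¹ : ℂ) • br counit χ + (2⁻¹ : ℂ) • br χ counit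
    + (-(2⁻¹) : ℂ) • br χ χ

variable (χ : A →ₗ[ℂ] ℂ)
    (hε : (counit : A →ₗ[ℂ] ℂ) ∘ₗ LinearMap.mul' ℂ A = br counit counit)
    (hχ : χ ∘ₗ LinearMap.mul' ℂ A = br χ χ)
    (hcc : cnv χ χ = (counit : A →ₗ[ℂ] ℂ))

include hε hχ hcc in
lemma RmulLeft :
    Rmap χ ∘ₗ LinearMap.rTensor A (LinearMap.mul' ℂ A)
      = mulC ∘ₗ TensorProduct.map (Rmap χ) (Rmap χ)
          ∘ₗ (tensorTensorTensorComm ℂ A A A A).toLinearMap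
          ∘ₗ LinearMap.lTensor (A ⊗[ℂ] A) (comul (R := ℂ) (A := A)) := by
  simp only [Rmap, TensorProduct.map_add_left, TensorProduct.map_add_right,
    TensorProduct.map_smul_left, TensorProduct.map_smul_right,
    LinearMap.add_comp, LinearMap.comp_add, LinearMap.smul_comp, LinearMap.comp_smul]
  simp only [stepLHS _ _ hε, stepLHS _ _ hχ, stepL, hcc, cnv_counit_left, cnv_counit_right]
  module

include hε hχ hcc in
lemma RmulRight :
    Rmap χ ∘ₗ LinearMap.lTensor A (LinearMap.mul' ℂ A)
      = mulC ∘ₗ TensorProduct.map (Rmap χ) (Rmap χ)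
          ∘ₗ (tensorTensorTensorComm ℂ A A A A).toLinearMap
          ∘ₗ LinearMap.lTensor (A ⊗[ℂ] A) (TensorProduct.comm ℂ A A).toLinearMap
          ∘ₗ LinearMap.rTensor (A ⊗[ℂ] A) (comul (R := ℂ) (A := A)) := by
  simp only [Rmap, TensorProduct.map_add_left, TensorProduct.map_add_right,
    TensorProduct.map_smul_left, TensorProduct.map_smul_right,
    LinearMap.add_comp, LinearMap.comp_add, LinearMap.smul_comp, LinearMap.comp_smul]
  simp only [stepRHS' _ _ hε, stepRHS' _ _ hχ, stepR, hcc, cnv_counit_left, cnv_counit_right]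
  module

include hcc in
lemma RconvInv : convMul (Rmap χ) (Rmap χ) = counit2 (A := A) := by
  unfold QG.convMul counit2
  simp only [Rmap, TensorProduct.map_add_left, TensorProduct.map_add_right,
    TensorProduct.map_smul_left, TensorProduct.map_smul_right,
    LinearMap.add_comp, LinearMap.comp_add, LinearMap.smul_comp, LinearMap.comp_smul]
  simp only [stepC, hcc, cnv_counit_left, cnv_counit_right]
  module

end QGA
-- quasi-comm machinery
namespace QGA
open QG
variable {A : Type} [Ring A] [Bialgebra ℂ A]

def CL (f : A →ₗ[ℂ] ℂ) : A →ₗ[ℂ] A :=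
  (TensorProduct.rid ℂ A).toLinearMap ∘ₗ LinearMap.lTensor A f ∘ₗ comul
def CR (f : A →ₗ[ℂ] ℂ) : A →ₗ[ℂ] A :=
  (TensorProduct.lid ℂ A).toLinearMap ∘ₗ LinearMap.rTensor A f ∘ₗ comul

lemma CL_counit : CL (counit : A →ₗ[ℂ] ℂ) = LinearMap.id := by
  ext x
  simp [CL, lTensor_counit_comul]

lemma CR_counit : CR (counit : A →ₗ[ℂ] ℂ) = LinearMap.id := by
  ext x
  simp [CR, rTensor_counit_comul]

lemma lemQL (f g : A →ₗ[ℂ] ℂ) :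
    (TensorProduct.rid ℂ A).toLinearMap
        ∘ₗ TensorProduct.map (LinearMap.mul' ℂ A ∘ₗ (TensorProduct.comm ℂ A A).toLinearMap) (br f g)
        ∘ₗ T4 (A := A)
      = (LinearMap.mul' ℂ A ∘ₗ (TensorProduct.comm ℂ A A).toLinearMap)
          ∘ₗ TensorProduct.map ((TensorProduct.rid ℂ A).toLinearMap ∘ₗ LinearMap.lTensor A f)
              ((TensorProduct.rid ℂ A).toLinearMap ∘ₗ LinearMap.lTensor A g) := by
  ext x y u v
  simp [mulC, mul_smul_comm, smul_mul_assoc, smul_smul, mul_comm]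

lemma lemQR (f g : A →ₗ[ℂ] ℂ) :
    (TensorProduct.lid ℂ A).toLinearMap
        ∘ₗ TensorProduct.map (br f g) (LinearMap.mul' ℂ A)
        ∘ₗ T4 (A := A)
      = LinearMap.mul' ℂ A
          ∘ₗ TensorProduct.map ((TensorProduct.lid ℂ A).toLinearMap ∘ₗ LinearMap.rTensor A f)
              ((TensorProduct.lid ℂ A).toLinearMap ∘ₗ LinearMap.rTensor A g) := by
  ext x y u v
  simp [mulC, mul_smul_comm, smul_mul_assoc, smul_smul, mul_comm]

lemma stepQL (f g : A →ₗ[ℂ] ℂ) :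
    (TensorProduct.rid ℂ A).toLinearMap
        ∘ₗ TensorProduct.map (LinearMap.mul' ℂ A ∘ₗ (TensorProduct.comm ℂ A A).toLinearMap) (br f g)
        ∘ₗ comul2 (A := A)
      = (LinearMap.mul' ℂ A ∘ₗ (TensorProduct.comm ℂ A A).toLinearMap)
          ∘ₗ TensorProduct.map (CL f) (CL g) := by
  ext x y
  have h4 := LinearMap.congr_fun (lemQL f g) (comul x ⊗ₜ[ℂ] comul y)
  simp only [LinearMap.comp_apply, LinearEquiv.coe_coe] at h4
  simp only [AlgebraTensorModule.curry_apply, TensorProduct.curry_apply,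
    LinearMap.coe_restrictScalars, LinearMap.comp_apply, LinearEquiv.coe_coe,
    comul2, TensorProduct.map_tmul, h4, CL]

lemma stepQR (f g : A →ₗ[ℂ] ℂ) :
    (TensorProduct.lid ℂ A).toLinearMap
        ∘ₗ TensorProduct.map (br f g) (LinearMap.mul' ℂ A)
        ∘ₗ comul2 (A := A)
      = LinearMap.mul' ℂ A ∘ₗ TensorProduct.map (CR f) (CR g) := by
  ext x y
  have h4 := LinearMap.congr_fun (lemQR f g) (comul x ⊗ₜ[ℂ] comul y)
  simp only [LinearMap.comp_apply, LinearEquiv.coe_coe] at h4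
  simp only [AlgebraTensorModule.curry_apply, TensorProduct.curry_apply,
    LinearMap.coe_restrictScalars, LinearMap.comp_apply, LinearEquiv.coe_coe,
    comul2, TensorProduct.map_tmul, h4, CR]

lemma RquasiComm (χ : A →ₗ[ℂ] ℂ) (S T : A →ₗ[ℂ] A)
    (hS : CR χ = S) (hT : CL χ = T)
    (hstar : ∀ x y : A,
      y * x + T y * x + y * T x - T y * T x
        = x * y + x * S y + S x * y - S x * S y) :
    (TensorProduct.rid ℂ A).toLinearMap ∘ₗ
        TensorProduct.map (LinearMap.mul' ℂ A ∘ₗ (TensorProduct.comm ℂ A A).toLinearMap) (Rmap χ)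
          ∘ₗ comul2
      = (TensorProduct.lid ℂ A).toLinearMap ∘ₗ
        TensorProduct.map (Rmap χ) (LinearMap.mul' ℂ A) ∘ₗ comul2 := by
  simp only [Rmap, TensorProduct.map_add_left, TensorProduct.map_add_right,
    TensorProduct.map_smul_left, TensorProduct.map_smul_right,
    LinearMap.add_comp, LinearMap.comp_add, LinearMap.smul_comp, LinearMap.comp_smul]
  simp only [stepQL, stepQR, CL_counit, CR_counit, hS, hT]
  apply TensorProduct.ext'
  intro x y
  have h := hstar x y
  simp only [LinearMap.add_apply, LinearMap.smul_apply, LinearMap.comp_apply,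
    TensorProduct.map_tmul, LinearMap.id_coe, id_eq, LinearEquiv.coe_coe,
    TensorProduct.comm_tmul, LinearMap.mul'_apply]
  calc (2⁻¹ : ℂ) • (y * x) + (2⁻¹ : ℂ) • (T y * x) + (2⁻¹ : ℂ) • (y * T x)
        + (-(2⁻¹) : ℂ) • (T y * T x)
      = (2⁻¹ : ℂ) • (y * x + T y * x + y * T x - T y * T x) := by module
    _ = (2⁻¹ : ℂ) • (x * y + x * S y + S x * y - S x * S y) := by rw [h]
    _ = (2⁻¹ : ℂ) • (x * y) + (2⁻¹ : ℂ) • (x * S y) + (2⁻¹ : ℂ) • (S x * y)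
        + (-(2⁻¹) : ℂ) • (S x * S y) := by module

end QGA


section Helpers
variable {A : Type} [Ring A] [Bialgebra ℂ A]
def CL (f : A →ₗ[ℂ] ℂ) : A →ₗ[ℂ] A :=
  (TensorProduct.rid ℂ A).toLinearMap ∘ₗ LinearMap.lTensor A f ∘ₗ comul
def CR (f : A →ₗ[ℂ] ℂ) : A →ₗ[ℂ] A :=
  (TensorProduct.lid ℂ A).toLinearMap ∘ₗ LinearMap.rTensor A f ∘ₗ comul

def SA (χ : A →ₐ[ℂ] ℂ) : A →ₐ[ℂ] A :=
  ((Algebra.TensorProduct.lid ℂ A).toAlgHom.comp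
    (Algebra.TensorProduct.map χ (AlgHom.id ℂ A))).comp (Bialgebra.comulAlgHom ℂ A)

def TA (χ : A →ₐ[ℂ] ℂ) : A →ₐ[ℂ] A :=
  ((Algebra.TensorProduct.rid ℂ ℂ A).toAlgHom.comp
    (Algebra.TensorProduct.map (AlgHom.id ℂ A) χ)).comp (Bialgebra.comulAlgHom ℂ A)

lemma CR_eq (χ : A →ₐ[ℂ] ℂ) : CR χ.toLinearMap = (SA χ).toLinearMap := by
  have h : (TensorProduct.lid ℂ A).toLinearMap ∘ₗ LinearMap.rTensor A χ.toLinearMap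
      = ((Algebra.TensorProduct.lid ℂ A).toAlgHom.comp
          (Algebra.TensorProduct.map χ (AlgHom.id ℂ A))).toLinearMap := by
    ext x y; simp
  ext x
  simpa [CR, SA] using congrFun (congrArg DFunLike.coe h) (comul x)

lemma CL_eq (χ : A →ₐ[ℂ] ℂ) : CL χ.toLinearMap = (TA χ).toLinearMap := by
  have h : (TensorProduct.rid ℂ A).toLinearMap ∘ₗ LinearMap.lTensor A χ.toLinearMap
      = ((Algebra.TensorProduct.rid ℂ ℂ A).toAlgHom.comp
          (Algebra.TensorProduct.map (AlgHom.id ℂ A) χ)).toLinearMap := by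
    ext x y; simp
  ext x
  simpa [CL, TA] using congrFun (congrArg DFunLike.coe h) (comul x)

section vals
variable {m n : ℕ} (t : Fin (m + n) → Fin (m + n) → A) (pa : Fin (m + n) → ZMod 2)
    (hΔt : ∀ i j, Coalgebra.comul (R := ℂ) (t i j)
      = ∑ k : Fin (m + n), t i k ⊗ₜ[ℂ] t k j)
    (χ : A →ₐ[ℂ] ℂ)
    (hχ : ∀ i j, χ (t i j) = if i = j then (-1:ℂ)^((pa i).val) else 0)

include hΔt hχ in
lemma SA_t (i j : Fin (m+n)) : SA χ (t i j) = (-1:ℂ)^((pa i).val) • t i j := by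
  have : SA χ (t i j)
      = (TensorProduct.lid ℂ A) (LinearMap.rTensor A χ.toLinearMap (comul (t i j))) := by
    have := congrFun (congrArg DFunLike.coe (CR_eq χ)) (t i j)
    simpa [CR] using this.symm
  rw [this, hΔt]
  simp only [map_sum, LinearMap.rTensor_tmul, AlgHom.toLinearMap_apply, hχ]
  rw [Finset.sum_congr rfl (fun k _ => by rw [TensorProduct.lid_tmul])]
  simp [ite_smul]

include hΔt hχ in
lemma TA_t (i j : Fin (m+n)) : TA χ (t i j) = (-1:ℂ)^((pa j).val) • t i j := by
  have : TA χ (t i j)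
      = (TensorProduct.rid ℂ A) (LinearMap.lTensor A χ.toLinearMap (comul (t i j))) := by
    have := congrFun (congrArg DFunLike.coe (CL_eq χ)) (t i j)
    simpa [CL] using this.symm
  rw [this, hΔt]
  simp only [map_sum, LinearMap.lTensor_tmul, AlgHom.toLinearMap_apply, hχ]
  rw [Finset.sum_congr rfl (fun k _ => by rw [TensorProduct.rid_tmul])]
  simp [ite_smul]

end vals

lemma zm2' (z : ZMod 2) : z = 0 ∨ z = 1 := by revert z; decide
lemma zval2 : ((2:ZMod 2)).val = 0 := rfl
lemma sg_add' (a a' : ZMod 2) :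
    (-1:ℂ)^((a+a').val) = (-1)^(a.val) * (-1)^(a'.val) := by
  rcases zm2' a with rfl|rfl <;> rcases zm2' a' with rfl|rfl <;>
    norm_num [show ((0:ZMod 2)).val = 0 from rfl, show ((1:ZMod 2)).val = 1 from rfl, zval2]
lemma sg_add_mul' (a a' c : ZMod 2) :
    (-1:ℂ)^((a+a').val * c.val) = (-1)^(a.val*c.val) * (-1)^(a'.val*c.val) := by
  rcases zm2' a with rfl|rfl <;> rcases zm2' a' with rfl|rfl <;> rcases zm2' c with rfl|rfl <;>
    norm_num [show ((0:ZMod 2)).val = 0 from rfl, show ((1:ZMod 2)).val = 1 from rfl, zval2]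
lemma sg_mul_add' (a c c' : ZMod 2) :
    (-1:ℂ)^(a.val * (c+c').val) = (-1)^(a.val*c.val) * (-1)^(a.val*c'.val) := by
  rw [Nat.mul_comm, sg_add_mul', Nat.mul_comm, Nat.mul_comm c'.val]
lemma sg_inj' (a b : ZMod 2) (h : (-1:ℂ)^a.val = (-1)^b.val) : a = b := by
  rcases zm2' a with rfl|rfl <;> rcases zm2' b with rfl|rfl <;>
    revert h <;> norm_num [show ((0:ZMod 2)).val = 0 from rfl, show ((1:ZMod 2)).val = 1 from rfl]

section closure
variable {m n : ℕ} (t : Fin (m + n) → Fin (m + n) → A) (pa : Fin (m + n) → ZMod 2)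
    (χ : A →ₐ[ℂ] ℂ)
    (hcomm : ∀ i j k l, t i j * t k l
      = ((-1 : ℂ) ^ ((pa i).val * (pa k).val + (pa j).val * (pa l).val)) • (t k l * t i j))
    (SAt : ∀ i j, SA χ (t i j) = (-1:ℂ)^((pa i).val) • t i j)
    (TAt : ∀ i j, TA χ (t i j) = (-1:ℂ)^((pa j).val) • t i j)

include hcomm SAt TAt in
lemma step1 : ∀ w ∈ Submonoid.closure (Set.range fun p : Fin (m+n) × Fin (m+n) => t p.1 p.2),
    ∃ a b : ZMod 2, SA χ w = (-1:ℂ)^a.val • w ∧ TA χ w = (-1:ℂ)^b.val • w ∧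
      ∀ i j, w * t i j
        = ((-1:ℂ)^(a.val * (pa i).val) * (-1:ℂ)^(b.val * (pa j).val)) • (t i j * w) := by
  intro w hw
  induction hw using Submonoid.closure_induction with
  | mem x hx =>
    obtain ⟨⟨k,l⟩, rfl⟩ := hx
    refine ⟨pa k, pa l, SAt k l, TAt k l, fun i j => ?_⟩
    rw [hcomm k l i j, pow_add]
  | one =>
    exact ⟨0, 0, by simp, by simp, fun i j => by
      simp [show ((0:ZMod 2)).val = 0 from rfl]⟩
  | mul x y hx hy ihx ihy =>
    obtain ⟨a1, b1, hS1, hT1, hc1⟩ := ihx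
    obtain ⟨a2, b2, hS2, hT2, hc2⟩ := ihy
    refine ⟨a1+a2, b1+b2, ?_, ?_, fun i j => ?_⟩
    · rw [map_mul, hS1, hS2, smul_mul_smul_comm, sg_add']
    · rw [map_mul, hT1, hT2, smul_mul_smul_comm, sg_add']
    · rw [mul_assoc, hc2 i j, mul_smul_comm, ← mul_assoc x (t i j) y, hc1 i j,
        smul_mul_assoc, smul_smul, mul_assoc (t i j) x y]
      congr 1
      rw [sg_add_mul', sg_add_mul']
      ring

include hcomm SAt TAt in
lemma step2 : ∀ w' ∈ Submonoid.closure (Set.range fun p : Fin (m+n) × Fin (m+n) => t p.1 p.2),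
    ∃ c d : ZMod 2, SA χ w' = (-1:ℂ)^c.val • w' ∧ TA χ w' = (-1:ℂ)^d.val • w' ∧
      ∀ w ∈ Submonoid.closure (Set.range fun p : Fin (m+n) × Fin (m+n) => t p.1 p.2),
        ∀ a b : ZMod 2, SA χ w = (-1:ℂ)^a.val • w → TA χ w = (-1:ℂ)^b.val • w →
          w * w' = ((-1:ℂ)^(a.val * c.val) * (-1:ℂ)^(b.val * d.val)) • (w' * w) := by
  intro w' hw'
  induction hw' using Submonoid.closure_induction with
  | mem x hx =>
    obtain ⟨⟨i,j⟩, rfl⟩ := hx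
    refine ⟨pa i, pa j, SAt i j, TAt i j, fun w hw a b hSa hTb => ?_⟩
    obtain ⟨a0, b0, hS0, hT0, hgen⟩ := step1 t pa χ hcomm SAt TAt w hw
    by_cases hw0 : w = 0
    · subst hw0; simp
    · have ha : a = a0 := by
        apply sg_inj'
        have hz : ((-1:ℂ)^a.val - (-1:ℂ)^a0.val) • w = 0 := by
          rw [sub_smul, ← hSa, ← hS0, sub_self]
        rcases smul_eq_zero.mp hz with h | h
        · exact sub_eq_zero.mp h
        · exact absurd h hw0
      have hb : b = b0 := by
        apply sg_inj'
        have hz : ((-1:ℂ)^b.val - (-1:ℂ)^b0.val) • w = 0 := by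
          rw [sub_smul, ← hTb, ← hT0, sub_self]
        rcases smul_eq_zero.mp hz with h | h
        · exact sub_eq_zero.mp h
        · exact absurd h hw0
      subst ha; subst hb
      exact hgen i j
  | one =>
    exact ⟨0, 0, by simp, by simp, fun w hw a b _ _ => by
      simp [show ((0:ZMod 2)).val = 0 from rfl]⟩
  | mul x y hx hy ihx ihy =>
    obtain ⟨c1, d1, hS1, hT1, hc1⟩ := ihx
    obtain ⟨c2, d2, hS2, hT2, hc2⟩ := ihy
    refine ⟨c1+c2, d1+d2, ?_, ?_, fun w hw a b hSa hTb => ?_⟩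
    · rw [map_mul, hS1, hS2, smul_mul_smul_comm, sg_add']
    · rw [map_mul, hT1, hT2, smul_mul_smul_comm, sg_add']
    · rw [← mul_assoc, hc1 w hw a b hSa hTb, smul_mul_assoc, mul_assoc x w y,
        hc2 w hw a b hSa hTb, mul_smul_comm, smul_smul, ← mul_assoc x y w]
      congr 1
      rw [sg_mul_add', sg_mul_add']
      ring

end closure

section star
variable {m n : ℕ} (t : Fin (m + n) → Fin (m + n) → A) (pa : Fin (m + n) → ZMod 2)
    (χ : A →ₐ[ℂ] ℂ)
    (hcomm : ∀ i j k l, t i j * t k l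
      = ((-1 : ℂ) ^ ((pa i).val * (pa k).val + (pa j).val * (pa l).val)) • (t k l * t i j))
    (SAt : ∀ i j, SA χ (t i j) = (-1:ℂ)^((pa i).val) • t i j)
    (TAt : ∀ i j, TA χ (t i j) = (-1:ℂ)^((pa j).val) • t i j)
    (hgen : ∀ x : A, x ∈ Submodule.span ℂ
      ((Submonoid.closure (Set.range fun p : Fin (m+n) × Fin (m+n) => t p.1 p.2) : Submonoid A) : Set A))

/-- the difference bilinear map for the star identity -/
def Dstar (S T : A →ₗ[ℂ] A) : A →ₗ[ℂ] A →ₗ[ℂ] A :=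
  LinearMap.mk₂ ℂ (fun x y =>
    (y * x + T y * x + y * T x - T y * T x) - (x * y + x * S y + S x * y - S x * S y))
    (fun x x' y => by simp [mul_add, add_mul, map_add]; abel)
    (fun c x y => by
      simp [mul_smul_comm, smul_mul_assoc, map_smul, smul_sub, smul_add])
    (fun x y y' => by simp [mul_add, add_mul, map_add]; abel)
    (fun c x y => by
      simp [mul_smul_comm, smul_mul_assoc, map_smul, smul_sub, smul_add])

include hcomm SAt TAt in
lemma Dstar_mono : ∀ w ∈ Submonoid.closure (Set.range fun p : Fin (m+n) × Fin (m+n) => t p.1 p.2),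
    ∀ w' ∈ Submonoid.closure (Set.range fun p : Fin (m+n) × Fin (m+n) => t p.1 p.2),
      Dstar (SA χ).toLinearMap (TA χ).toLinearMap w w' = 0 := by
  intro w hw w' hw'
  obtain ⟨a, b, hSw, hTw, -⟩ := step1 t pa χ hcomm SAt TAt w hw
  obtain ⟨c, d, hSw', hTw', hcom⟩ := step2 t pa χ hcomm SAt TAt w' hw'
  have hmm := hcom w hw a b hSw hTw
  simp only [Dstar, LinearMap.mk₂_apply, AlgHom.toLinearMap_apply]
  rw [hSw, hTw, hSw', hTw', sub_eq_zero]
  simp only [smul_mul_assoc, mul_smul_comm, smul_smul]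
  rcases zm2' a with rfl|rfl <;> rcases zm2' b with rfl|rfl <;>
    rcases zm2' c with rfl|rfl <;> rcases zm2' d with rfl|rfl <;>
    · simp only [show ((0:ZMod 2)).val = 0 from rfl, show ((1:ZMod 2)).val = 1 from rfl,
        pow_zero, pow_one, one_mul, mul_one, Nat.mul_zero, Nat.zero_mul, Nat.mul_one,
        Nat.one_mul] at hmm ⊢
      rw [hmm]
      module

include hcomm SAt TAt hgen in
lemma hstar : ∀ x y : A,
    y * x + TA χ y * x + y * TA χ x - TA χ y * TA χ x
      = x * y + x * SA χ y + SA χ x * y - SA χ x * SA χ y := by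
  have hD : ∀ x y : A, Dstar (SA χ).toLinearMap (TA χ).toLinearMap x y = 0 := by
    have h1 : ∀ w ∈ Submonoid.closure (Set.range fun p : Fin (m+n) × Fin (m+n) => t p.1 p.2),
        Dstar (SA χ).toLinearMap (TA χ).toLinearMap w = 0 := by
      intro w hw
      apply LinearMap.ext
      intro y
      have hy := hgen y
      induction hy using Submodule.span_induction with
      | mem y' hy' => exact Dstar_mono t pa χ hcomm SAt TAt w hw y' hy'
      | zero => simp
      | add u v hu hv ihu ihv => simp [ihu, ihv]
      | smul c u hu ihu => simp [ihu]
    intro x y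
    have hx := hgen x
    induction hx using Submodule.span_induction with
    | mem w hw => rw [h1 w hw]; rfl
    | zero => simp
    | add u v hu hv ihu ihv => simp [map_add, ihu, ihv]
    | smul c u hu ihu => simp [map_smul, ihu]
  intro x y
  have := hD x y
  simp only [Dstar, LinearMap.mk₂_apply, AlgHom.toLinearMap_apply, sub_eq_zero] at this
  exact this

end star

section gen
variable {m n : ℕ} (t : Fin (m + n) → Fin (m + n) → A) (pa : Fin (m + n) → ZMod 2)
    (hcomm : ∀ i j k l, t i j * t k l
      = ((-1 : ℂ) ^ ((pa i).val * (pa k).val + (pa j).val * (pa l).val)) • (t k l * t i j))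
    (huniv : ∀ (B : Type) [Ring B] [Algebra ℂ B] (b : Fin (m + n) → Fin (m + n) → B),
      (∀ i j k l, b i j * b k l
        = ((-1 : ℂ) ^ ((pa i).val * (pa k).val + (pa j).val * (pa l).val)) • (b k l * b i j)) →
      ∃! Ψ : A →ₐ[ℂ] B, ∀ i j, Ψ (t i j) = b i j)

include hcomm huniv in
lemma gen_all : ∀ x : A, x ∈ Submodule.span ℂ
    ((Submonoid.closure (Set.range fun p : Fin (m+n) × Fin (m+n) => t p.1 p.2) : Submonoid A) : Set A) := by
  have hadj : ∀ x : A, x ∈ Algebra.adjoin ℂ (Set.range fun p : Fin (m+n) × Fin (m+n) => t p.1 p.2) := by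
    set B := Algebra.adjoin ℂ (Set.range fun p : Fin (m+n) × Fin (m+n) => t p.1 p.2) with hB
    have hmem : ∀ i j, t i j ∈ B := fun i j => Algebra.subset_adjoin ⟨(i,j), rfl⟩
    obtain ⟨Ψ, hΨ, -⟩ := huniv ↥B (fun i j => ⟨t i j, hmem i j⟩)
      (fun i j k l => Subtype.ext (by
        push_cast
        exact hcomm i j k l))
    obtain ⟨Φ₀, -, huniq⟩ := huniv A t hcomm
    have e1 : B.val.comp Ψ = AlgHom.id ℂ A := by
      rw [huniq (B.val.comp Ψ) (fun i j => by simp [hΨ]), huniq (AlgHom.id ℂ A) (fun i j => rfl)]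
    intro x
    have : B.val (Ψ x) = x := congrFun (congrArg DFunLike.coe e1) x
    rw [← this]
    exact (Ψ x).2
  intro x
  have := hadj x
  rw [← Subalgebra.mem_toSubmodule, Algebra.adjoin_eq_span] at this
  exact this

end gen

end Helpers
end MyAux

open QG in
/-- Consider the bialgebra `M'(m|n)` generated by a matrix coalgebra
`{t_{ij}}` with `Δt_{ij} = Σ_k t_{ik} ⊗ t_{kj}`, `ε(t_{ij}) = δ_{ij}` and relations
`t_{ij} t_{kl} = (−1)^{|i||k| + |j||l|} t_{kl} t_{ij}`.  Then the bilinear form with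
`R(t_{ij} ⊗ t_{kl}) = (−1)^{|i||k|} δ_{ij} δ_{kl}`, extended as a bialgebra
bicharacter, is a well-defined coquasitriangular structure on `M'(m|n)`; in
particular the quasi-commutativity axiom reproduces the commutation relations on
the generators. -/
theorem stmt_15 (m n : ℕ) (A : Type) [Ring A] [Bialgebra ℂ A]
    (t : Fin (m + n) → Fin (m + n) → A)
    (pa : Fin (m + n) → ZMod 2) (hpa : ∀ i, pa i = if (i : ℕ) < m then 1 else 0)
    -- matrix coalgebra structure on the generators
    (hΔt : ∀ i j, Coalgebra.comul (R := ℂ) (t i j)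
      = ∑ k : Fin (m + n), t i k ⊗ₜ[ℂ] t k j)
    (hεt : ∀ i j, Coalgebra.counit (R := ℂ) (t i j) = if i = j then (1 : ℂ) else 0)
    -- commutation relations
    (hcomm : ∀ i j k l, t i j * t k l
      = ((-1 : ℂ) ^ ((pa i).val * (pa k).val + (pa j).val * (pa l).val)) • (t k l * t i j))
    -- `A` is, as an algebra, universal on these generators and relations
    (huniv : ∀ (B : Type) [Ring B] [Algebra ℂ B] (b : Fin (m + n) → Fin (m + n) → B),
      (∀ i j k l, b i j * b k l
        = ((-1 : ℂ) ^ ((pa i).val * (pa k).val + (pa j).val * (pa l).val)) • (b k l * b i j)) →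
      ∃! Ψ : A →ₐ[ℂ] B, ∀ i j, Ψ (t i j) = b i j) :
    ∃ R : A ⊗[ℂ] A →ₗ[ℂ] ℂ,
      (∀ i j k l, R (t i j ⊗ₜ[ℂ] t k l)
        = ((-1 : ℂ) ^ ((pa i).val * (pa k).val)) *
            ((if i = j then (1 : ℂ) else 0) * (if k = l then (1 : ℂ) else 0))) ∧
      IsCoquasitriangular R := by
  classical
  -- the diagonal relation helper
  have diagRel : ∀ s : Fin (m+n) → ℂ, ∀ i j k l,
      (if i = j then s i else 0) * (if k = l then s k else 0)
        = ((-1 : ℂ) ^ ((pa i).val * (pa k).val + (pa j).val * (pa l).val)) •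
            ((if k = l then s k else 0) * (if i = j then s i else 0)) := by
    intro s i j k l
    by_cases hij : i = j
    · by_cases hkl : k = l
      · subst hij; subst hkl
        have h1 : (-1 : ℂ) ^ ((pa i).val * (pa k).val + (pa i).val * (pa k).val) = 1 := by
          rw [pow_add, ← mul_pow]; norm_num
        simp [h1, mul_comm]
      · simp [hkl]
    · simp [hij]
  -- the sign character χ
  obtain ⟨χA, hχA, -⟩ := huniv ℂ (fun i j => if i = j then (-1:ℂ)^((pa i).val) else 0)
    (diagRel _)
  set χl : A →ₗ[ℂ] ℂ := χA.toLinearMap with hχl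
  -- multiplicativity
  have hmulε : (counit : A →ₗ[ℂ] ℂ) ∘ₗ LinearMap.mul' ℂ A = QGA.br counit counit := by
    ext x y; simp [QGA.br, QG.mulC]
  have hmulχ : χl ∘ₗ LinearMap.mul' ℂ A = QGA.br χl χl := by
    ext x y; simp [QGA.br, QG.mulC, hχl, map_mul]
  -- χ * χ = ε  (convolution)
  have hcc : QGA.cnv χl χl = (counit : A →ₗ[ℂ] ℂ) := by
    have hlin : QGA.cnv χl χl
        = ((Algebra.TensorProduct.lmul' ℂ (S := ℂ)).comp
            ((Algebra.TensorProduct.map χA χA).comp (Bialgebra.comulAlgHom ℂ A))).toLinearMap := by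
      apply LinearMap.ext; intro x
      have h2 : (QG.mulC ∘ₗ TensorProduct.map χl χl)
          = ((Algebra.TensorProduct.lmul' ℂ (S := ℂ)).comp
              (Algebra.TensorProduct.map χA χA)).toLinearMap := by
        ext u v
        simp [QG.mulC, hχl, Algebra.TensorProduct.lmul'_apply_tmul]
      simpa [QGA.cnv, QGA.br] using congrFun (congrArg DFunLike.coe h2) (comul x)
    have hval : ∀ i j, ((Algebra.TensorProduct.lmul' ℂ (S := ℂ)).comp
        ((Algebra.TensorProduct.map χA χA).comp (Bialgebra.comulAlgHom ℂ A))) (t i j)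
          = if i = j then (1:ℂ) else 0 := by
      intro i j
      have := congrFun (congrArg DFunLike.coe hlin) (t i j)
      simp only [AlgHom.toLinearMap_apply] at this
      rw [← this]
      have hcm : QGA.cnv χl χl (t i j)
          = QGA.br χl χl (comul (t i j)) := rfl
      rw [hcm, hΔt i j, map_sum]
      have : ∀ k : Fin (m+n), QGA.br χl χl (t i k ⊗ₜ[ℂ] t k j)
          = (if i = k then (-1:ℂ)^((pa i).val) else 0) * (if k = j then (-1:ℂ)^((pa k).val) else 0) := by
        intro k
        rw [QGA.br_tmul]
        simp [hχl, hχA]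
      rw [Finset.sum_congr rfl (fun k _ => this k)]
      by_cases hij : i = j
      · subst hij
        rw [Finset.sum_eq_single i]
        · simp [← mul_pow]
        · intro k _ hk
          simp [Ne.symm hk, hk]
        · simp
      · rw [Finset.sum_eq_zero, if_neg hij]
        intro k _
        by_cases h1 : i = k
        · subst h1; simp [hij]
        · simp [h1]
    obtain ⟨Φδ, hΦδ, uniqδ⟩ := huniv ℂ (fun i j => if i = j then (1:ℂ) else 0)
      (by simpa using diagRel (fun _ => (1:ℂ)))
    have e1 := uniqδ _ hval
    have e2 := uniqδ (Bialgebra.counitAlgHom ℂ A) (fun i j => hεt i j)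
    rw [hlin, e1, ← e2]
    rfl
  -- eigenvalues on generators
  have hSAt : ∀ i j, SA χA (t i j) = (-1:ℂ)^((pa i).val) • t i j := SA_t t pa hΔt χA hχA
  have hTAt : ∀ i j, TA χA (t i j) = (-1:ℂ)^((pa j).val) • t i j := TA_t t pa hΔt χA hχA
  -- star identity
  have hst := hstar t pa χA hcomm hSAt hTAt (gen_all t pa hcomm huniv)
  -- the R matrix
  refine ⟨QGA.Rmap χl, ?_, ?_⟩
  · intro i j k l
    simp only [QGA.Rmap, LinearMap.add_apply, LinearMap.smul_apply, QGA.br_tmul, hεt,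
      hχl, AlgHom.toLinearMap_apply, hχA, smul_eq_mul]
    by_cases hij : i = j
    · by_cases hkl : k = l
      · subst hij; subst hkl
        simp only [if_pos rfl]
        rcases zm2' (pa i) with h1 | h1 <;> rcases zm2' (pa k) with h2 | h2 <;>
          rw [h1, h2] <;>
          norm_num [show ((0:ZMod 2)).val = 0 from rfl, show ((1:ZMod 2)).val = 1 from rfl]
      · simp [hkl]
    · simp [hij]
  · refine ⟨⟨QGA.Rmap χl, QGA.RconvInv χl hcc, QGA.RconvInv χl hcc⟩,
      QGA.RmulLeft χl hmulε hmulχ hcc, QGA.RmulRight χl hmulε hmulχ hcc, ?_⟩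
    exact QGA.RquasiComm χl (SA χA).toLinearMap (TA χA).toLinearMap (CR_eq χA) (CL_eq χA)
      (fun x y => hst x y)
end
end

section
/- Let H be a finite-dimensional quasitriangular Hopf algebra (H, R_H) and A a coquasitriangular Hopf algebra (A, R_A), dually paired via a Hopf pairing ⟨·,·⟩ : H ⊗ A → C compatible with the (co)quasitriangular structures, and let D be an H-module algebra and B an A-comodule coalgebra with a bilinear pairing ⟨·,·⟩ : D ⊗ B → C satisfying ⟨d, bc⟩ = ⟨d⁽¹⁾, b⟩⟨d⁽²⁾, c⟩-type duality and the compatibility ⟨h ▷ d, b⟩ = ⟨h, b⁽¹⁾⟩⟨d, b⁽⁰⁾⟩ for the H-action and A-coaction. Then the bilinear form on the smash/biproduct spaces defined by ⟨d ⊗ h, b ⊗ a⟩ := ⟨d, b⟩⟨h, a⟩ satisfies the multiplicativity axiom of a Hopf pairing with respect to the smash product multiplication on D ⊗ H and the bosonized coproduct on B ⊗ A. -/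
open TensorProduct Coalgebra

noncomputable section

noncomputable section

open QG

variable {D H B A : Type}
variable [Ring D] [Algebra ℂ D] [Ring H] [HopfAlgebra ℂ H]
variable [Ring B] [Algebra ℂ B] [Ring A] [HopfAlgebra ℂ A]

namespace QG19

/-- The smash product multiplication on `D ⊗ H`:
`(d ⊗ h)(e ⊗ g) = d (h⁽¹⁾ ▷ e) ⊗ h⁽²⁾ g`, for an action `act : H ⊗ D → D`. -/
def smashMul (act : H ⊗[ℂ] D →ₗ[ℂ] D) :
    (D ⊗[ℂ] H) ⊗[ℂ] (D ⊗[ℂ] H) →ₗ[ℂ] D ⊗[ℂ] H :=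
  TensorProduct.map
      (LinearMap.mul' ℂ D ∘ₗ LinearMap.lTensor D act ∘ₗ (TensorProduct.assoc ℂ D H D).toLinearMap)
      (LinearMap.mul' ℂ H)
    ∘ₗ (tensorTensorTensorComm ℂ (D ⊗[ℂ] H) H D H).toLinearMap
    ∘ₗ LinearMap.rTensor (D ⊗[ℂ] H)
        ((TensorProduct.assoc ℂ D H H).symm.toLinearMap
          ∘ₗ LinearMap.lTensor D (Coalgebra.comul (R := ℂ)))

/-- The bosonized coproduct on `B ⊗ A`:
`Δ(b ⊗ a) = (b⁽¹⁾ ⊗ b⁽²⁾⁽¹⁾ a⁽¹⁾) ⊗ (b⁽²⁾⁽⁰⁾ ⊗ a⁽²⁾)`, for a coaction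
`β : B → A ⊗ B` and a coproduct `ΔB : B → B ⊗ B`. -/
def bosComul (β : B →ₗ[ℂ] A ⊗[ℂ] B) (ΔB : B →ₗ[ℂ] B ⊗[ℂ] B) :
    B ⊗[ℂ] A →ₗ[ℂ] (B ⊗[ℂ] A) ⊗[ℂ] (B ⊗[ℂ] A) :=
  TensorProduct.map
      (LinearMap.lTensor B (LinearMap.mul' ℂ A) ∘ₗ (TensorProduct.assoc ℂ B A A).toLinearMap)
      LinearMap.id
    ∘ₗ (tensorTensorTensorComm ℂ (B ⊗[ℂ] A) B A A).toLinearMap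
    ∘ₗ LinearMap.rTensor (A ⊗[ℂ] A) (TensorProduct.assoc ℂ B A B).symm.toLinearMap
    ∘ₗ TensorProduct.map (LinearMap.lTensor B β ∘ₗ ΔB) (Coalgebra.comul (R := ℂ))

/-- The pairing `⟨d ⊗ h, b ⊗ a⟩ = ⟨d, b⟩⟨h, a⟩` between the bosonizations. -/
def bosPair (pD : D ⊗[ℂ] B →ₗ[ℂ] ℂ) (pHA : H ⊗[ℂ] A →ₗ[ℂ] ℂ) :
    (D ⊗[ℂ] H) ⊗[ℂ] (B ⊗[ℂ] A) →ₗ[ℂ] ℂ :=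
  mulC ∘ₗ TensorProduct.map pD pHA ∘ₗ (tensorTensorTensorComm ℂ D H B A).toLinearMap

end QG19

/-! Write `b ↦ b₍₋₁₎ ⊗ b₍₀₎` for the coaction of `A` on `B`. On pure tensors the left side is
`⟨d (h⁽¹⁾ ▷ e), b⟩⟨h⁽²⁾g, a⟩`; multiplicativity of `⟨·,·⟩ : D ⊗ B → ℂ` in `D`, the compatibility
`⟨h ▷ e, c⟩ = ⟨h, c₍₋₁₎⟩⟨e, c₍₀₎⟩` and multiplicativity of `⟨·,·⟩ : H ⊗ A → ℂ` in `H` turn it into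
`⟨d, b⁽¹⁾⟩⟨h⁽¹⁾, b⁽²⁾₍₋₁₎⟩⟨e, b⁽²⁾₍₀₎⟩⟨h⁽²⁾, a⁽¹⁾⟩⟨g, a⁽²⁾⟩`. The right side is
`⟨d, b⁽¹⁾⟩⟨h, b⁽²⁾₍₋₁₎a⁽¹⁾⟩⟨e, b⁽²⁾₍₀₎⟩⟨g, a⁽²⁾⟩`, and multiplicativity of the Hopf pairing in `A`
splits the middle factor into the same terms. -/

namespace QG19

open LinearMap

section Pairing

variable {R M N X Y : Type*} [CommSemiring R]

theorem pairing_mul_tmul [Semiring X] [Algebra R X] [AddCommMonoid Y] [Module R Y]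
    {p : X ⊗[R] Y →ₗ[R] R} {Δ : Y →ₗ[R] Y ⊗[R] Y}
    (hp : p ∘ₗ rTensor Y (mul' R X)
      = mul' R R ∘ₗ TensorProduct.map p p ∘ₗ (tensorTensorTensorComm R X X Y Y).toLinearMap
          ∘ₗ lTensor (X ⊗[R] X) Δ)
    {y : Y} {s : Finset (Y × Y)} (hy : Δ y = ∑ i ∈ s, i.1 ⊗ₜ i.2) (x x' : X) :
    p ((x * x') ⊗ₜ y) = ∑ i ∈ s, p (x ⊗ₜ i.1) * p (x' ⊗ₜ i.2) := by
  simpa [hy, tmul_sum, tensorTensorTensorComm_tmul] using congr($hp ((x ⊗ₜ x') ⊗ₜ y))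

theorem pairing_tmul_mul [AddCommMonoid X] [Module R X] [Semiring Y] [Algebra R Y]
    {p : X ⊗[R] Y →ₗ[R] R} {Δ : X →ₗ[R] X ⊗[R] X}
    (hp : p ∘ₗ lTensor X (mul' R Y)
      = mul' R R ∘ₗ TensorProduct.map p p ∘ₗ (tensorTensorTensorComm R X X Y Y).toLinearMap
          ∘ₗ rTensor (Y ⊗[R] Y) Δ)
    {x : X} {s : Finset (X × X)} (hx : Δ x = ∑ i ∈ s, i.1 ⊗ₜ i.2) (y y' : Y) :
    p (x ⊗ₜ (y * y')) = ∑ i ∈ s, p (i.1 ⊗ₜ y) * p (i.2 ⊗ₜ y') := by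
  simpa [hx, sum_tmul, tensorTensorTensorComm_tmul] using congr($hp (x ⊗ₜ (y ⊗ₜ y')))

theorem pairing_act_tmul [AddCommMonoid M] [Module R M]
    [AddCommMonoid N] [Module R N] [AddCommMonoid X] [Module R X] [AddCommMonoid Y] [Module R Y]
    {act : X ⊗[R] M →ₗ[R] M} {pX : X ⊗[R] Y →ₗ[R] R} {pM : M ⊗[R] N →ₗ[R] R}
    {β : N →ₗ[R] Y ⊗[R] N}
    (hcompat : pM ∘ₗ rTensor N act
      = mul' R R ∘ₗ TensorProduct.map pX pM ∘ₗ (tensorTensorTensorComm R X M Y N).toLinearMap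
          ∘ₗ lTensor (X ⊗[R] M) β)
    {n : N} {s : Finset (Y × N)} (hn : β n = ∑ k ∈ s, k.1 ⊗ₜ k.2) (x : X) (m : M) :
    pM (act (x ⊗ₜ m) ⊗ₜ n) = ∑ k ∈ s, pX (x ⊗ₜ k.1) * pM (m ⊗ₜ k.2) := by
  simpa [hn, tmul_sum, tensorTensorTensorComm_tmul] using congr($hcompat ((x ⊗ₜ m) ⊗ₜ n))

end Pairing

theorem bosPair_tmul (pD : D ⊗[ℂ] B →ₗ[ℂ] ℂ) (pHA : H ⊗[ℂ] A →ₗ[ℂ] ℂ) (d : D) (h : H) (b : B)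
    (a : A) : bosPair pD pHA ((d ⊗ₜ h) ⊗ₜ (b ⊗ₜ a)) = pD (d ⊗ₜ b) * pHA (h ⊗ₜ a) := rfl

theorem smashMul_tmul (act : H ⊗[ℂ] D →ₗ[ℂ] D) {h : H} {s : Finset (H × H)}
    (hh : comul (R := ℂ) h = ∑ i ∈ s, i.1 ⊗ₜ i.2) (d e : D) (g : H) :
    smashMul act ((d ⊗ₜ h) ⊗ₜ (e ⊗ₜ g)) = ∑ i ∈ s, (d * act (i.1 ⊗ₜ e)) ⊗ₜ (i.2 * g) := by
  simp [smashMul, hh, tmul_sum, sum_tmul, tensorTensorTensorComm_tmul]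

theorem bosComul_tmul (β : B →ₗ[ℂ] A ⊗[ℂ] B) (ΔB : B →ₗ[ℂ] B ⊗[ℂ] B)
    {b : B} {s : Finset (B × B)} (hb : ΔB b = ∑ j ∈ s, j.1 ⊗ₜ j.2)
    {r : B → Finset (A × B)} (hr : ∀ y, β y = ∑ k ∈ r y, k.1 ⊗ₜ k.2)
    {a : A} {t : Finset (A × A)} (ha : comul (R := ℂ) a = ∑ l ∈ t, l.1 ⊗ₜ l.2) :
    bosComul β ΔB (b ⊗ₜ a)
      = ∑ l ∈ t, ∑ j ∈ s, ∑ k ∈ r j.2, (j.1 ⊗ₜ (k.1 * l.1)) ⊗ₜ (k.2 ⊗ₜ l.2) := by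
  simp [bosComul, hb, hr, ha, sum_tmul, tmul_sum, tensorTensorTensorComm_tmul]

end QG19

open QG19 in
theorem stmt_19_general
    -- the Hopf pairing between H and A
    (pHA : H ⊗[ℂ] A →ₗ[ℂ] ℂ)
    (hp_mul_left : pHA ∘ₗ LinearMap.rTensor A (LinearMap.mul' ℂ H)
      = mulC ∘ₗ TensorProduct.map pHA pHA ∘ₗ (tensorTensorTensorComm ℂ H H A A).toLinearMap
          ∘ₗ LinearMap.lTensor (H ⊗[ℂ] H) (Coalgebra.comul (R := ℂ)))
    (hp_mul_right : pHA ∘ₗ LinearMap.lTensor H (LinearMap.mul' ℂ A)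
      = mulC ∘ₗ TensorProduct.map pHA pHA ∘ₗ (tensorTensorTensorComm ℂ H H A A).toLinearMap
          ∘ₗ LinearMap.rTensor (A ⊗[ℂ] A) (Coalgebra.comul (R := ℂ)))
    -- D is an H-module algebra
    (act : H ⊗[ℂ] D →ₗ[ℂ] D)
    -- B is an A-comodule coalgebra
    (β : B →ₗ[ℂ] A ⊗[ℂ] B) (ΔB : B →ₗ[ℂ] B ⊗[ℂ] B)
    -- the pairing between D and B and its compatibilities
    (pD : D ⊗[ℂ] B →ₗ[ℂ] ℂ)
    (hpD_mul : pD ∘ₗ LinearMap.rTensor B (LinearMap.mul' ℂ D)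
      = mulC ∘ₗ TensorProduct.map pD pD ∘ₗ (tensorTensorTensorComm ℂ D D B B).toLinearMap
          ∘ₗ LinearMap.lTensor (D ⊗[ℂ] D) ΔB)
    (hcompat : pD ∘ₗ LinearMap.rTensor B act
      = mulC ∘ₗ TensorProduct.map pHA pD ∘ₗ (tensorTensorTensorComm ℂ H D A B).toLinearMap
          ∘ₗ LinearMap.lTensor (H ⊗[ℂ] D) β) :
    -- conclusion: the multiplicativity axiom for the pairing of the bosonizations
    bosPair pD pHA ∘ₗ LinearMap.rTensor (B ⊗[ℂ] A) (smashMul act)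
      = mulC ∘ₗ TensorProduct.map (bosPair pD pHA) (bosPair pD pHA)
          ∘ₗ (tensorTensorTensorComm ℂ (D ⊗[ℂ] H) (D ⊗[ℂ] H)
                (B ⊗[ℂ] A) (B ⊗[ℂ] A)).toLinearMap
          ∘ₗ LinearMap.lTensor ((D ⊗[ℂ] H) ⊗[ℂ] (D ⊗[ℂ] H)) (bosComul β ΔB) := by
  ext d h e g b a
  obtain ⟨sh, hh⟩ := exists_finset (comul (R := ℂ) h)
  obtain ⟨sa, ha⟩ := exists_finset (comul (R := ℂ) a)
  obtain ⟨sb, hb⟩ := exists_finset (ΔB b)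
  choose rB hrB using fun y : B => exists_finset (β y)
  simp only [AlgebraTensorModule.curry_apply, curry_apply, LinearMap.coe_restrictScalars,
    LinearMap.comp_apply, LinearMap.rTensor_tmul, LinearMap.lTensor_tmul, LinearEquiv.coe_coe,
    smashMul_tmul act hh, bosComul_tmul β ΔB hb hrB ha, map_sum, tmul_sum, sum_tmul,
    tensorTensorTensorComm_tmul, map_tmul, bosPair_tmul, mulC, LinearMap.mul'_apply]
  simp only [pairing_mul_tmul hpD_mul hb, pairing_mul_tmul hp_mul_left ha,
    pairing_act_tmul hcompat (hrB _), pairing_tmul_mul hp_mul_right hh, Finset.sum_mul, Finset.mul_sum]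
  rw [Finset.sum_comm]
  refine Finset.sum_congr rfl fun l _ => ?_
  rw [Finset.sum_comm]
  refine Finset.sum_congr rfl fun j _ => ?_
  rw [Finset.sum_comm]
  exact Finset.sum_congr rfl fun k _ => Finset.sum_congr rfl fun i _ => by ring

open QG19 in
/-- Let `(H, R_H)` be a finite-dimensional quasitriangular Hopf
algebra and `(A, R_A)` a coquasitriangular Hopf algebra, dually paired compatibly;
let `D` be an `H`-module algebra and `B` an `A`-comodule coalgebra, dually paired
compatibly.  Then `⟨d ⊗ h, b ⊗ a⟩ := ⟨d, b⟩⟨h, a⟩` satisfies the multiplicativity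
axiom of a Hopf pairing with respect to the smash product multiplication on
`D ⊗ H` and the bosonized coproduct on `B ⊗ A`. -/
theorem stmt_19
    -- the quasitriangular structure on H
    (RH : H ⊗[ℂ] H) [FiniteDimensional ℂ H]
    (hRHinv : ∃ RH' : H ⊗[ℂ] H, RH * RH' = 1 ∧ RH' * RH = 1)
    (hRHqc : ∀ h : H, (Coalgebra.comul (R := ℂ) h) * RH
      = RH * (TensorProduct.comm ℂ H H (Coalgebra.comul (R := ℂ) h)))
    -- the coquasitriangular structure on A
    (RA : A ⊗[ℂ] A →ₗ[ℂ] ℂ) (hRA : IsCoquasitriangular RA)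
    -- the Hopf pairing between H and A
    (pHA : H ⊗[ℂ] A →ₗ[ℂ] ℂ)
    (hp_mul_left : pHA ∘ₗ LinearMap.rTensor A (LinearMap.mul' ℂ H)
      = mulC ∘ₗ TensorProduct.map pHA pHA ∘ₗ (tensorTensorTensorComm ℂ H H A A).toLinearMap
          ∘ₗ LinearMap.lTensor (H ⊗[ℂ] H) (Coalgebra.comul (R := ℂ)))
    (hp_mul_right : pHA ∘ₗ LinearMap.lTensor H (LinearMap.mul' ℂ A)
      = mulC ∘ₗ TensorProduct.map pHA pHA ∘ₗ (tensorTensorTensorComm ℂ H H A A).toLinearMap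
          ∘ₗ LinearMap.rTensor (A ⊗[ℂ] A) (Coalgebra.comul (R := ℂ)))
    (hp_unit : (∀ a : A, pHA ((1 : H) ⊗ₜ[ℂ] a) = Coalgebra.counit (R := ℂ) a) ∧
      (∀ h : H, pHA (h ⊗ₜ[ℂ] (1 : A)) = Coalgebra.counit (R := ℂ) h))
    -- compatibility of R_H and R_A through the pairing
    (hRR : ∀ z : A ⊗[ℂ] A,
      (mulC ∘ₗ TensorProduct.map pHA pHA ∘ₗ (tensorTensorTensorComm ℂ H H A A).toLinearMap)
        (RH ⊗ₜ[ℂ] z) = RA z)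
    -- D is an H-module algebra
    (act : H ⊗[ℂ] D →ₗ[ℂ] D)
    (hact1 : ∀ d : D, act ((1 : H) ⊗ₜ[ℂ] d) = d)
    (hactmul : act ∘ₗ LinearMap.rTensor D (LinearMap.mul' ℂ H)
      = act ∘ₗ LinearMap.lTensor H act ∘ₗ (TensorProduct.assoc ℂ H H D).toLinearMap)
    (hmodalg : act ∘ₗ LinearMap.lTensor H (LinearMap.mul' ℂ D)
      = LinearMap.mul' ℂ D ∘ₗ TensorProduct.map act act
          ∘ₗ (tensorTensorTensorComm ℂ H H D D).toLinearMap
          ∘ₗ LinearMap.rTensor (D ⊗[ℂ] D) (Coalgebra.comul (R := ℂ)))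
    -- B is an A-comodule coalgebra
    (β : B →ₗ[ℂ] A ⊗[ℂ] B) (ΔB : B →ₗ[ℂ] B ⊗[ℂ] B)
    (hβcounit : (TensorProduct.lid ℂ B).toLinearMap
        ∘ₗ LinearMap.rTensor B (Coalgebra.counit (R := ℂ)) ∘ₗ β = LinearMap.id)
    (hβcoassoc : LinearMap.rTensor B (Coalgebra.comul (R := ℂ)) ∘ₗ β
      = (TensorProduct.assoc ℂ A A B).symm.toLinearMap ∘ₗ LinearMap.lTensor A β ∘ₗ β)
    (hΔBcoassoc : LinearMap.rTensor B ΔB ∘ₗ ΔB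
      = (TensorProduct.assoc ℂ B B B).symm.toLinearMap ∘ₗ LinearMap.lTensor B ΔB ∘ₗ ΔB)
    -- the pairing between D and B and its compatibilities
    (pD : D ⊗[ℂ] B →ₗ[ℂ] ℂ)
    (hpD_mul : pD ∘ₗ LinearMap.rTensor B (LinearMap.mul' ℂ D)
      = mulC ∘ₗ TensorProduct.map pD pD ∘ₗ (tensorTensorTensorComm ℂ D D B B).toLinearMap
          ∘ₗ LinearMap.lTensor (D ⊗[ℂ] D) ΔB)
    (hcompat : pD ∘ₗ LinearMap.rTensor B act
      = mulC ∘ₗ TensorProduct.map pHA pD ∘ₗ (tensorTensorTensorComm ℂ H D A B).toLinearMap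
          ∘ₗ LinearMap.lTensor (H ⊗[ℂ] D) β) :
    -- conclusion: the multiplicativity axiom for the pairing of the bosonizations
    bosPair pD pHA ∘ₗ LinearMap.rTensor (B ⊗[ℂ] A) (smashMul act)
      = mulC ∘ₗ TensorProduct.map (bosPair pD pHA) (bosPair pD pHA)
          ∘ₗ (tensorTensorTensorComm ℂ (D ⊗[ℂ] H) (D ⊗[ℂ] H)
                (B ⊗[ℂ] A) (B ⊗[ℂ] A)).toLinearMap
          ∘ₗ LinearMap.lTensor ((D ⊗[ℂ] H) ⊗[ℂ] (D ⊗[ℂ] H)) (bosComul β ΔB) :=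
  stmt_19_general pHA hp_mul_left hp_mul_right act β ΔB pD hpD_mul hcompat
end
end
end
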